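/- arXiv:1909.13004 — 2 statements merged into one kernel-verified Lean document; each statement's English description precedes it below -/
import Mathlib

section
/- With Q(s_k) = [P(s_k|y*)/P(y_o|s_k)] / Σ_r [P(s_r|y*)/P(y_o|s_r)] and joint Q(y_o, s_k) = P(y_o|s_k)·Q(s_k), the marginal Q(y_o) = Σ_k Q(y_o, s_k) equals (Σ_r P(s_r|y*)/P(y_o|s_r))^{-1}, and the conditional Q(s_k|y_o) = Q(y_o, s_k)/Q(y_o) equals P(s_k|y*) for every k. -/
/-! Dividing the posterior by the likelihood and renormalising by `S = ∑ r, p r / π r` makes each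
joint weight `π k * Q k` equal to `p k / S`; since the `p k` sum to one, the marginal is `S⁻¹`
and conditioning on it returns `p k`. -/

open Finset

lemma sum_div_pos_of_sum_eq_one {ι : Type*} [Fintype ι] {p π : ι → ℝ}
    (hp : ∀ k, 0 < p k) (hpsum : ∑ k, p k = 1) (hπ : ∀ k, 0 < π k) :
    0 < ∑ k, p k / π k := by
  have hne : (univ : Finset ι).Nonempty := by
    by_contra h
    rw [not_nonempty_iff_eq_empty.mp h, sum_empty] at hpsum
    exact zero_ne_one hpsum
  exact sum_pos (fun k _ => div_pos (hp k) (hπ k)) hne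

lemma mul_div_div_of_ne_zero {a b c : ℝ} (ha : a ≠ 0) : a * (b / a / c) = b / c := by
  rw [div_div, mul_div_assoc', mul_div_mul_left _ _ ha]

theorem stmt_5_general (m : ℕ) (p π : Fin m → ℝ)
    (hp : ∀ k, 0 < p k) (hpsum : ∑ k, p k = 1)
    (hπ0 : ∀ k, 0 < π k)
    (Q : Fin m → ℝ)
    (hQ : ∀ k, Q k = (p k / π k) / ∑ r, p r / π r)
    (Qjoint : Fin m → ℝ) (hQjoint : ∀ k, Qjoint k = π k * Q k)
    (Qy : ℝ) (hQy : Qy = ∑ k, Qjoint k) :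
    Qy = (∑ r, p r / π r)⁻¹ ∧ ∀ k, Qjoint k / Qy = p k := by
  set S := ∑ r, p r / π r
  have hS : S ≠ 0 := (sum_div_pos_of_sum_eq_one hp hpsum hπ0).ne'
  have hjoint : ∀ k, Qjoint k = p k / S := fun k => by
    rw [hQjoint, hQ, mul_div_div_of_ne_zero (hπ0 k).ne']
  have hmarginal : Qy = S⁻¹ := by
    rw [hQy, sum_congr rfl fun k _ => hjoint k, ← sum_div, hpsum, one_div]
  refine ⟨hmarginal, fun k => ?_⟩
  rw [hjoint, hmarginal, div_inv_eq_mul, div_mul_cancel₀ _ hS]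

/-- With Q(s_k) as constructed, the marginal Q(y_o) = Σ_k P(y_o|s_k)·Q(s_k)
equals (Σ_r P(s_r|y*)/P(y_o|s_r))⁻¹ and the conditional Q(s_k|y_o) equals P(s_k|y*). -/
theorem stmt_5 (m : ℕ) (hm : 0 < m) (p π : Fin m → ℝ)
    (hp : ∀ k, 0 < p k) (hpsum : ∑ k, p k = 1)
    (hπ0 : ∀ k, 0 < π k) (hπ1 : ∀ k, π k ≤ 1)
    (Q : Fin m → ℝ)
    (hQ : ∀ k, Q k = (p k / π k) / ∑ r, p r / π r)
    (Qjoint : Fin m → ℝ) (hQjoint : ∀ k, Qjoint k = π k * Q k)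
    (Qy : ℝ) (hQy : Qy = ∑ k, Qjoint k) :
    Qy = (∑ r, p r / π r)⁻¹ ∧ ∀ k, Qjoint k / Qy = p k :=
  stmt_5_general m p π hp hpsum hπ0 Q hQ Qjoint hQjoint Qy hQy
end

section
/- For any fixed label o ∈ {0,1} and any data (likelihood vector p_k = P(s_k|y*) > 0 summing to 1, posteriors π_k = P(y_o|s_k) ∈ (0,1]), there exists a joint probability distribution Q on {0,1} × {1,...,m} such that Q's conditional distribution of labels given s_k assigns probability π_k to label o, and Q's conditional distribution of features given label o equals (p_k). In particular, the true label is not determined by the pair ((p_k), (π_k)). -/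
/-!
Put any feature marginal `w` on `{1,…,m}` and let the label be `o` with probability `π k` given
`s_k`; the posteriors are then `π` by construction, and the joint mass of `(o, s_k)` is `w k * π k`.
Choosing `w` proportional to `p k / π k` makes that mass proportional to `p k`, so the
likelihoods given `o` are `p`. The normaliser `∑ k, p k / π k` is at least `∑ k, p k = 1`.
-/

open Finset

lemma Fin.sum_ite_eq_add {M : Type*} [AddCommMonoid M] (o : Fin 2) (a b : M) :
    ∑ i : Fin 2, (if i = o then a else b) = a + b := by
  fin_cases o <;> simp [Fin.sum_univ_two, add_comm]

lemma one_le_sum_div_of_le_one {ι : Type*} [Fintype ι] {p π : ι → ℝ}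
    (hp : ∀ k, 0 ≤ p k) (hpsum : ∑ k, p k = 1) (hπ0 : ∀ k, 0 < π k) (hπ1 : ∀ k, π k ≤ 1) :
    1 ≤ ∑ k, p k / π k :=
  hpsum ▸ sum_le_sum fun k _ => le_div_self (hp k) (hπ0 k) (hπ1 k)

section LabelJoint

variable {ι : Type*} (o : Fin 2) (w π : ι → ℝ)

def labelJoint : Fin 2 × ι → ℝ :=
  fun z => w z.2 * if z.1 = o then π z.2 else 1 - π z.2

lemma labelJoint_nonneg {w π : ι → ℝ} (hw : ∀ k, 0 ≤ w k) (hπ0 : ∀ k, 0 ≤ π k)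
    (hπ1 : ∀ k, π k ≤ 1) (z : Fin 2 × ι) : 0 ≤ labelJoint o w π z := by
  refine mul_nonneg (hw z.2) ?_
  split_ifs
  exacts [hπ0 z.2, sub_nonneg.2 (hπ1 z.2)]

lemma labelJoint_self (k : ι) : labelJoint o w π (o, k) = w k * π k := by
  simp [labelJoint]

lemma sum_labelJoint_fst (k : ι) : ∑ y, labelJoint o w π (y, k) = w k := by
  simp only [labelJoint, ← mul_sum, Fin.sum_ite_eq_add, add_sub_cancel, mul_one]

lemma sum_labelJoint [Fintype ι] : ∑ z, labelJoint o w π z = ∑ k, w k := by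
  rw [Fintype.sum_prod_type_right]
  exact sum_congr rfl fun k _ => sum_labelJoint_fst o w π k

lemma labelJoint_self_div_sum_fst {w : ι → ℝ} {k : ι} (hw : w k ≠ 0) :
    labelJoint o w π (o, k) / ∑ y, labelJoint o w π (y, k) = π k := by
  rw [labelJoint_self, sum_labelJoint_fst, mul_div_cancel_left₀ _ hw]

end LabelJoint

theorem stmt_6_general (m : ℕ) (o : Fin 2) (p π : Fin m → ℝ)
    (hp : ∀ k, 0 < p k) (hpsum : ∑ k, p k = 1)
    (hπ0 : ∀ k, 0 < π k) (hπ1 : ∀ k, π k ≤ 1) :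
    ∃ Q : Fin 2 × Fin m → ℝ,
      (∀ z, 0 ≤ Q z) ∧ (∑ z, Q z = 1) ∧
      (∀ k, 0 < ∑ o', Q (o', k) ∧ Q (o, k) / ∑ o', Q (o', k) = π k) ∧
      (0 < ∑ k, Q (o, k) ∧ ∀ k, Q (o, k) / ∑ k', Q (o, k') = p k) := by
  set S := ∑ k, p k / π k
  have hS : 0 < S := one_pos.trans_le <|
    one_le_sum_div_of_le_one (fun k => (hp k).le) hpsum hπ0 hπ1
  set w : Fin m → ℝ := fun k => p k / π k / S
  have hw (k : Fin m) : 0 < w k := div_pos (div_pos (hp k) (hπ0 k)) hS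
  have hQo (k : Fin m) : labelJoint o w π (o, k) = p k / S := by
    rw [labelJoint_self, div_mul_eq_mul_div, div_mul_cancel₀ _ (hπ0 k).ne']
  have hQo_sum : ∑ k, labelJoint o w π (o, k) = 1 / S := by
    simp only [hQo, ← sum_div, hpsum]
  refine ⟨labelJoint o w π, labelJoint_nonneg o (fun k => (hw k).le) (fun k => (hπ0 k).le) hπ1,
    ?_, fun k => ⟨?_, labelJoint_self_div_sum_fst o π (hw k).ne'⟩, ?_, fun k => ?_⟩
  · rw [sum_labelJoint, ← sum_div, div_self hS.ne']
  · exact (sum_labelJoint_fst o w π k).symm ▸ hw k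
  · exact hQo_sum ▸ one_div_pos.2 hS
  · rw [hQo, hQo_sum, div_div_div_cancel_right₀ hS.ne', div_one]

/-- For any label o ∈ {0,1} and data ((p_k),(π_k)) there exists a joint
distribution Q on {0,1} × {1,...,m} whose conditional of labels given s_k assigns
probability π_k to o, and whose conditional of features given label o equals (p_k). -/
theorem stmt_6 (m : ℕ) (hm : 0 < m) (o : Fin 2) (p π : Fin m → ℝ)
    (hp : ∀ k, 0 < p k) (hpsum : ∑ k, p k = 1)
    (hπ0 : ∀ k, 0 < π k) (hπ1 : ∀ k, π k ≤ 1) :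
    ∃ Q : Fin 2 × Fin m → ℝ,
      (∀ z, 0 ≤ Q z) ∧ (∑ z, Q z = 1) ∧
      (∀ k, 0 < ∑ o', Q (o', k) ∧ Q (o, k) / ∑ o', Q (o', k) = π k) ∧
      (0 < ∑ k, Q (o, k) ∧ ∀ k, Q (o, k) / ∑ k', Q (o, k') = p k) :=
  stmt_6_general m o p π hp hpsum hπ0 hπ1
end
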